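/- Let … → A_k → B_k → Q_k → A_{k−1} → … be a long exact sequence of systems of abelian groups indexed by [0,∞), natural in t, and suppose the map A_k → B_k is an r-isomorphism in each degree k; then each system Q_k satisfies: the zero map 0 → Q_k is a 2r-isomorphism, i.e., for every t and q ∈ (Q_k)_t, the structure map σ : (Q_k)_t → (Q_k)_{t+2r} sends q to 0. -/

import Mathlib

open scoped NNReal

/-- A system of abelian groups: a functor `[0,∞) → Ab`. -/
structure SysAb where
  obj : ℝ≥0 → AddCommGrpCat
  map : ∀ {s t : ℝ≥0}, s ≤ t → (obj s ⟶ obj t)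
  map_id : ∀ s : ℝ≥0, map (le_refl s) = CategoryTheory.CategoryStruct.id (obj s)
  map_comp : ∀ {s t u : ℝ≥0} (h₁ : s ≤ t) (h₂ : t ≤ u),
    CategoryTheory.CategoryStruct.comp (map h₁) (map h₂) = map (h₁.trans h₂)

/-- A map of systems of abelian groups: a natural transformation. -/
structure SysAb.Hom (X Y : SysAb) where
  app : ∀ s : ℝ≥0, (X.obj s ⟶ Y.obj s)
  naturality : ∀ {s t : ℝ≥0} (h : s ≤ t) (x : X.obj s),
    app t (X.map h x) = Y.map h (app s x)

/-- `f` is an `r`-monomorphism: `f(a) = 0` in `B_t` implies `σ(a) = 0` in `A_{t+r}`. -/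
def SysAb.Hom.IsMono {X Y : SysAb} (r : ℝ≥0) (f : X.Hom Y) : Prop :=
  ∀ (s : ℝ≥0) (a : X.obj s), f.app s a = 0 →
    X.map (le_self_add : s ≤ s + r) a = 0

/-- `f` is an `r`-epimorphism: for `b ∈ B_t` there is `a ∈ A_{t+r}` with
`σ(b) = f(a)` in `B_{t+r}`. -/
def SysAb.Hom.IsEpi {X Y : SysAb} (r : ℝ≥0) (f : X.Hom Y) : Prop :=
  ∀ (s : ℝ≥0) (b : Y.obj s), ∃ a : X.obj (s + r),
    f.app (s + r) a = Y.map (le_self_add : s ≤ s + r) b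

/-- `f` is an `r`-isomorphism if it is both an `r`-monomorphism and an `r`-epimorphism. -/
def SysAb.Hom.IsIso {X Y : SysAb} (r : ℝ≥0) (f : X.Hom Y) : Prop :=
  f.IsMono r ∧ f.IsEpi r

/-- Given a long exact sequence of systems of abelian groups
`… → A_k → B_k → Q_k →∂ A_{k-1} → B_{k-1} → …` (exact at every parameter `t`, natural in
`t`) in which every map `A_k → B_k` is an `r`-isomorphism, every element of `Q_{k,t}`
maps to `0` in `Q_{k,t+2r}` under the structure map; i.e. `0 → Q_k` is a
`2r`-isomorphism. -/
theorem stmt16 (A B Q : ℤ → SysAb)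
    (i : ∀ k : ℤ, (A k).Hom (B k)) (p : ∀ k : ℤ, (B k).Hom (Q k))
    (d : ∀ k : ℤ, (Q k).Hom (A (k - 1)))
    (exactB : ∀ (k : ℤ) (t : ℝ≥0) (b : (B k).obj t),
      (p k).app t b = 0 ↔ ∃ a : (A k).obj t, (i k).app t a = b)
    (exactQ : ∀ (k : ℤ) (t : ℝ≥0) (q : (Q k).obj t),
      (d k).app t q = 0 ↔ ∃ b : (B k).obj t, (p k).app t b = q)
    (exactA : ∀ (k : ℤ) (t : ℝ≥0) (a : (A (k - 1)).obj t),
      (i (k - 1)).app t a = 0 ↔ ∃ q : (Q k).obj t, (d k).app t q = a)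
    (r : ℝ≥0) (hi : ∀ k : ℤ, (i k).IsIso r) :
    ∀ (k : ℤ) (t : ℝ≥0) (q : (Q k).obj t),
      (Q k).map (le_self_add : t ≤ t + 2 * r) q = 0 := by
  intro k t q
  have h01 : t ≤ t + r := le_self_add
  have h12 : t + r ≤ t + r + r := le_self_add
  have h23 : t + r + r ≤ t + 2 * r := le_of_eq (by ring)
  -- d q dies after r, so σ_r q lifts to B
  have ha : (i (k - 1)).app t ((d k).app t q) = 0 :=
    (exactA k t _).2 ⟨q, rfl⟩
  have hdq : (d k).app (t + r) ((Q k).map h01 q) = 0 := by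
    rw [(d k).naturality h01 q, (hi (k - 1)).1 t _ ha]
  obtain ⟨b, hb⟩ := (exactQ k (t + r) _).1 hdq
  -- σ_r b is in the image of i, hence killed by p
  obtain ⟨a', ha'⟩ := (hi k).2 (t + r) b
  have hpb : (p k).app (t + r + r) ((B k).map h12 b) = 0 :=
    (exactB k (t + r + r) _).2 ⟨a', ha'⟩
  have key : (Q k).map h12 ((Q k).map h01 q) = 0 := by
    rw [← hb, ← (p k).naturality h12 b, hpb]
  have comp1 : (Q k).map (h01.trans (h12.trans h23)) q =
      (Q k).map h23 ((Q k).map h12 ((Q k).map h01 q)) := by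
    rw [← (Q k).map_comp h01 (h12.trans h23), CategoryTheory.comp_apply,
      ← (Q k).map_comp h12 h23, CategoryTheory.comp_apply]
  have : (Q k).map (le_self_add : t ≤ t + 2 * r) q =
      (Q k).map (h01.trans (h12.trans h23)) q := rfl
  rw [this, comp1, key, map_zero]
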